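/- Let g = gl(2,ℝ) = ℝe₀ ⊕ sl(2,ℝ) with sl(2,ℝ)-basis (h, e₊, e₋), [h, e_±] = ±2e_±, [e₊,e₋] = h, and dual basis (e⁰, h*, e⁺, e⁻). For φ = a_h h* + a₊ e⁺ + a₋ e⁻, the 2-form ω = e⁰ ∧ φ + dφ is non-degenerate if and only if a_h² + 4a₊a₋ ≠ 0, i.e. if and only if φ is non-isotropic with respect to the Killing form of sl(2,ℝ). -/
import Mathlib


/-!
STATEMENT 17. Let `g = gl(2,ℝ) = ℝe₀ ⊕ sl(2,ℝ)` with `sl(2,ℝ)`-basis `(h, e₊, e₋)`,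
`[h, e₊] = 2e₊`, `[h, e₋] = -2e₋`, `[e₊, e₋] = h` (and `e₀` central), with dual basis
`(e⁰, h*, e⁺, e⁻)`. For `φ = a_h h* + a₊ e⁺ + a₋ e⁻`, the 2-form `ω = e⁰ ∧ φ + dφ` is
non-degenerate if and only if `a_h² + 4 a₊ a₋ ≠ 0`, i.e. if and only if `φ` is
non-isotropic with respect to the Killing form of `sl(2,ℝ)`.

We realize `gl(2,ℝ)` on `Fin 4 → ℝ` (coordinates w.r.t. `e₀, h, e₊, e₋`), with the
Chevalley–Eilenberg convention `dφ(u,v) = -φ([u,v])`.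
-/

namespace Stmt17

/-- the Lie bracket of `gl(2,ℝ)` in the basis `(e₀, h, e₊, e₋)`. -/
def br (u v : Fin 4 → ℝ) : Fin 4 → ℝ :=
  ![0, u 2 * v 3 - u 3 * v 2, 2 * (u 1 * v 2 - u 2 * v 1), -(2 * (u 1 * v 3 - u 3 * v 1))]

/-- `φ = a_h h* + a₊ e⁺ + a₋ e⁻`. -/
def φ (ah ap am : ℝ) (u : Fin 4 → ℝ) : ℝ := ah * u 1 + ap * u 2 + am * u 3

/-- `ω = e⁰ ∧ φ + dφ`, where `dφ(u,v) = -φ([u,v])`. -/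
def ω (ah ap am : ℝ) (u v : Fin 4 → ℝ) : ℝ :=
  u 0 * φ ah ap am v - v 0 * φ ah ap am u - φ ah ap am (br u v)

end Stmt17

open Stmt17 in
theorem stmt17 (ah ap am : ℝ) :
    (∀ u : Fin 4 → ℝ, (∀ v : Fin 4 → ℝ, ω ah ap am u v = 0) → u = 0)
      ↔ ah ^ 2 + 4 * ap * am ≠ 0 := by
  constructor
  · intro hnd hq
    by_cases h0 : ah = 0 ∧ ap = 0 ∧ am = 0
    · obtain ⟨h1, h2, h3⟩ := h0
      have := hnd ![0, 1, 0, 0] (by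
        intro v
        simp [ω, φ, br, h1, h2, h3])
      have := congrFun this 1
      simp at this
    · have := hnd ![0, ah, 2 * am, 2 * ap] (by
        intro v
        simp only [ω, φ, br, Matrix.cons_val_zero, Matrix.cons_val_one, Matrix.head_cons,
          Matrix.cons_val_two, Matrix.tail_cons, Matrix.cons_val_three]
        linear_combination (-(v 0)) * hq)
      apply h0
      refine ⟨?_, ?_, ?_⟩
      · have := congrFun this 1; simpa using this
      · have h2 := congrFun this 3; simp at h2; linarith
      · have h3 := congrFun this 2; simp at h3; linarith
  · intro hq u hu
    have hA := hu ![1, 0, 0, 0]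
    have hB := hu ![0, 1, 0, 0]
    have hC := hu ![0, 0, 1, 0]
    have hD := hu ![0, 0, 0, 1]
    simp only [ω, φ, br, Matrix.cons_val_zero, Matrix.cons_val_one, Matrix.head_cons,
      Matrix.cons_val_two, Matrix.tail_cons, Matrix.cons_val_three] at hA hB hC hD
    funext i
    fin_cases i <;> simp only [Pi.zero_apply]
    · have h0 : (ah ^ 2 + 4 * ap * am) * u 0 = 0 := by
        linear_combination ah * hB + 2 * ap * hD + 2 * am * hC
      exact (mul_eq_zero.mp h0).resolve_left hq
    · have h1 : (ah ^ 2 + 4 * ap * am) * u 1 = 0 := by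
        linear_combination (-ah) * hA + ap * hD - am * hC
      exact (mul_eq_zero.mp h1).resolve_left hq
    · have h2 : (ah ^ 2 + 4 * ap * am) * u 2 = 0 := by
        linear_combination am * hB - ah * hD - 2 * am * hA
      exact (mul_eq_zero.mp h2).resolve_left hq
    · have h3 : (ah ^ 2 + 4 * ap * am) * u 3 = 0 := by
        linear_combination ah * hC - ap * hB - 2 * ap * hA
      exact (mul_eq_zero.mp h3).resolve_left hq
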